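/- arXiv:2503.07328 — 2 statements merged into one kernel-verified Lean document; each statement's English description precedes it below -/
import Mathlib

section
/- (Cardinality and Sub-qualifier Preservation; lem:cardinality-qor-trans) For every typing environment Γ and qualifiers q₁, q₂, if card_Γ(q₁) = card_Γ(q₁ ∪ q₂), then step_Γ(q₁) ∪ step_Γ(q₂) = step_Γ(q₁) ∪ q₂ (equivalently, qtrans¹_Γ(q₁) ∪ qtrans¹_Γ(q₂) = qtrans¹_Γ(q₁) ∪ q₂). -/
/-- Variables are natural numbers (a fixed type with decidable equality). -/
abbrev Var := ℕ

/-- A qualifier is a finite set of variables. -/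
abbrev Qual := Finset Var

/-- A typing environment is a finite list of bindings of a variable to a qualifier. -/
abbrev Env := List (Var × Qual)

/-- Cardinality of a qualifier `q` w.r.t. `Γ`: counts the bindings of `Γ`
whose bound variable lies in `q`. -/
def card (Γ : Env) (q : Qual) : ℕ :=
  match Γ with
  | [] => 0
  | (x, _) :: Γ' => if x ∈ q then 1 + card Γ' q else card Γ' q

/-- One-step reachability: `Γ ⊢ x ↝ y` iff some binding `(x, p) ∈ Γ` has `y ∈ p`. -/
def reaches (Γ : Env) (x y : Var) : Prop :=
  ∃ p : Qual, (x, p) ∈ Γ ∧ y ∈ p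

/-- Transitive reachability `Γ ⊢ x ↝* y`: the transitive closure of `reaches`. -/
inductive reachesStar (Γ : Env) : Var → Var → Prop
  | base {x y : Var} : reaches Γ x y → reachesStar Γ x y
  | step {x z y : Var} : reaches Γ x z → reachesStar Γ z y → reachesStar Γ x y

/-- One-step expansion: `step_Γ(q) = q ∪ ⋃_{x ∈ q} { y | Γ ⊢ x ↝ y }`. -/
def stepQ (Γ : Env) (q : Qual) : Qual :=
  q ∪ Γ.toFinset.biUnion (fun b => if b.1 ∈ q then b.2 else ∅)

/-- Fuel-indexed transitive lookup. -/
def qtransN (Γ : Env) : ℕ → Qual → Qual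
  | 0, q => q
  | n + 1, q => qtransN Γ n (stepQ Γ q)

/-- Full transitive lookup: iterate `|Γ|` times. -/
def qtrans (Γ : Env) (q : Qual) : Qual := qtransN Γ Γ.length q

/-- Propositional saturation: `⋃_{x ∈ q} { y | Γ ⊢ x ↝* y } ⊆ q`. -/
def psat (Γ : Env) (q : Qual) : Prop :=
  ∀ x ∈ q, ∀ y : Var, reachesStar Γ x y → y ∈ q


lemma card_mono (Γ : Env) {q q' : Qual} (hs : q ⊆ q') : card Γ q ≤ card Γ q' := by
  induction Γ with
  | nil => simp [card]
  | cons b Γ' ih =>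
    simp only [card]
    by_cases hx : b.1 ∈ q
    · have : b.1 ∈ q' := hs hx
      simp [hx, this]; omega
    · by_cases hx' : b.1 ∈ q' <;> simp [hx, hx'] <;> omega

lemma card_key (Γ : Env) (q₁ q₂ : Qual)
    (h : card Γ q₁ = card Γ (q₁ ∪ q₂)) :
    ∀ x p, (x, p) ∈ Γ → x ∈ q₂ → x ∈ q₁ := by
  induction Γ with
  | nil => intro x p hm; simp at hm
  | cons b Γ' ih =>
    intro x p hm hx2
    have hmono := card_mono Γ' (q := q₁) (q' := q₁ ∪ q₂) (Finset.subset_union_left)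
    simp only [card] at h
    by_cases h1 : b.1 ∈ q₁
    · have h1' : b.1 ∈ q₁ ∪ q₂ := Finset.mem_union_left _ h1
      simp [h1, h1'] at h
      rcases List.mem_cons.mp hm with heq | hm'
      · subst heq; exact h1
      · exact ih h x p hm' hx2
    · by_cases h2 : b.1 ∈ q₁ ∪ q₂
      · simp [h1, h2] at h; omega
      · simp [h1, h2] at h
        rcases List.mem_cons.mp hm with heq | hm'
        · subst heq; exact absurd (Finset.mem_union_right _ hx2) h2
        · exact ih h x p hm' hx2

/-- Cardinality and Sub-qualifier Preservation. -/
theorem cardinality_subqualifier_preservation (Γ : Env) (q₁ q₂ : Qual)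
    (h : card Γ q₁ = card Γ (q₁ ∪ q₂)) :
    stepQ Γ q₁ ∪ stepQ Γ q₂ = stepQ Γ q₁ ∪ q₂ := by
  have key := card_key Γ q₁ q₂ h
  apply Finset.Subset.antisymm
  · apply Finset.union_subset (Finset.subset_union_left)
    intro y hy
    simp only [stepQ, Finset.mem_union, Finset.mem_biUnion] at hy ⊢
    rcases hy with hy | ⟨b, hb, hy⟩
    · exact Or.inr hy
    · split at hy
      · rename_i hb1
        by_cases h1 : b.1 ∈ q₁
        · exact Or.inl (Or.inr ⟨b, hb, by simp [h1]; exact hy⟩)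
        · exact absurd (key b.1 b.2 (by simpa using hb) hb1) h1
      · simp at hy
  · apply Finset.union_subset (Finset.subset_union_left)
    intro y hy
    exact Finset.mem_union_right _ (Finset.mem_union_left _ hy)
end

section
/- (Equivalence of Deterministic and Propositional Saturation; Lemma 3.1 / lem:qenv-saturated-iff) For every typing environment Γ and qualifier q, q is propositionally saturated in Γ if and only if q is deterministically saturated in Γ; that is, (⋃_{x ∈ q} {y | Γ ⊢ x ↝* y} ⊆ q) ↔ (qtrans_Γ(q) = q). -/
lemma subset_stepQ (Γ : Env) (q : Qual) : q ⊆ stepQ Γ q :=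
  Finset.subset_union_left

lemma subset_qtransN (Γ : Env) : ∀ n q, q ⊆ qtransN Γ n q := by
  intro n
  induction n with
  | zero => intro q; simp [qtransN]
  | succ n ih =>
    intro q
    exact (subset_stepQ Γ q).trans (ih (stepQ Γ q))

lemma stepQ_eq_of_psat (Γ : Env) (q : Qual) (h : psat Γ q) : stepQ Γ q = q := by
  apply Finset.Subset.antisymm _ (subset_stepQ Γ q)
  apply Finset.union_subset (Finset.Subset.refl q)
  intro y hy
  rcases Finset.mem_biUnion.mp hy with ⟨b, hb, hyb⟩
  by_cases hx : b.1 ∈ q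
  · rw [if_pos hx] at hyb
    exact h b.1 hx y (reachesStar.base ⟨b.2, List.mem_toFinset.mp hb, hyb⟩)
  · rw [if_neg hx] at hyb; exact absurd hyb (Finset.notMem_empty y)

lemma qtransN_fixed (Γ : Env) (q : Qual) (h : stepQ Γ q = q) :
    ∀ n, qtransN Γ n q = q := by
  intro n
  induction n with
  | zero => rfl
  | succ n ih => simp [qtransN, h, ih]

lemma psat_of_stepQ_eq (Γ : Env) (q : Qual) (h : stepQ Γ q = q) : psat Γ q := by
  have key : ∀ x ∈ q, ∀ y, reaches Γ x y → y ∈ q := by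
    intro x hx y ⟨p, hp, hyp⟩
    rw [← h]
    apply Finset.mem_union_right
    exact Finset.mem_biUnion.mpr ⟨(x, p), List.mem_toFinset.mpr hp, by simpa [hx] using hyp⟩
  intro x hx y hr
  induction hr with
  | base h1 => exact key _ hx _ h1
  | step h1 _ ih => exact ih (key _ hx _ h1)

/-- Equivalence of Deterministic and Propositional Saturation (Lemma 3.1). -/
theorem psat_iff_dsat (Γ : Env) (q : Qual) :
    psat Γ q ↔ qtrans Γ q = q := by
  constructor
  · intro h
    exact qtransN_fixed Γ q (stepQ_eq_of_psat Γ q h) _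
  · intro h
    apply psat_of_stepQ_eq
    cases Γ with
    | nil => simp [stepQ]
    | cons b Γ' =>
      apply Finset.Subset.antisymm _ (subset_stepQ _ q)
      calc stepQ (b :: Γ') q ⊆ qtransN (b :: Γ') Γ'.length (stepQ (b :: Γ') q) :=
            subset_qtransN _ _ _
        _ = q := h
end
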